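/- The poset (esTam_n, ⊲) is a lattice. Moreover, the meet of two fb-tableaux M and N of size n is the fb-tableau L determined as follows: (a) the root belongs to L; (b) in each column j with 1 ≤ j ≤ n−1, the up-arrow of L is placed at the lower of the positions of the up-arrows of M and N in that column; (c) in each row i with 2 ≤ i ≤ n, let c be the leftmost of the positions of the left-arrows of M and N in that row; the left-arrow of L is placed at c if c does not lie strictly above the up-arrow of L in its column, and otherwise at the nearest cell to the left of c that does not lie strictly above the up-arrow of L in its column; (d) a free cell c of L belongs to L if and only if (c ∈ M or c is not free in M) and (c ∈ N or c is not free in N); L contains no cells other than the root, its arrows, and the free cells prescribed in (d). -/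

import Mathlib

open scoped Classical

namespace EsTam

/-- A cell `(i, j)`: `i` is the row index, `j` the column index. -/
abbrev Cell := ℕ × ℕ

/-- Membership in the staircase shape of size `n`: rows `1` and `2` consist of the
cells `(i, j)` with `1 ≤ j ≤ n`, and row `i` for `3 ≤ i ≤ n` consists of the cells
`(i, j)` with `i - 1 ≤ j ≤ n`. -/
def IsCell (n : ℕ) (c : Cell) : Prop :=
  1 ≤ c.1 ∧ c.1 ≤ n ∧ 1 ≤ c.2 ∧ c.2 ≤ n ∧ (c.1 ≤ 2 ∨ c.1 - 1 ≤ c.2)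

/-- The root cell `(1, n)`. -/
def root (n : ℕ) : Cell := (1, n)

/-- The border cells `(i, i - 1)` for `2 ≤ i ≤ n`. -/
def IsBorder (n : ℕ) (c : Cell) : Prop :=
  2 ≤ c.1 ∧ c.1 ≤ n ∧ c.2 = c.1 - 1

/-- An fb-tableau of size `n`: a set of cells of the staircase shape containing
the root and all border cells, and such that every cell other than the root has a
cell of the tableau strictly to its left in its row (same `i`, larger `j`) or
strictly above it in its column (same `j`, smaller `i`). -/
structure FB (n : ℕ) where
  cells : Set Cell
  isCell_of_mem : ∀ c ∈ cells, IsCell n c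
  root_mem : root n ∈ cells
  border_mem : ∀ c : Cell, IsBorder n c → c ∈ cells
  supported : ∀ c ∈ cells, c ≠ root n →
    (∃ j', c.2 < j' ∧ ((c.1, j') : Cell) ∈ cells) ∨
    (∃ i', i' < c.1 ∧ ((i', c.2) : Cell) ∈ cells)

variable {n : ℕ}

/-- `c` is a left-arrow of `T`: a cell of `T`, other than the root, with no cell of
`T` strictly to its left in its row. -/
def IsLeftArrow (T : FB n) (c : Cell) : Prop :=
  c ∈ T.cells ∧ c ≠ root n ∧ ∀ j', c.2 < j' → ((c.1, j') : Cell) ∉ T.cells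

/-- `c` is an up-arrow of `T`: a cell of `T`, other than the root, with no cell of
`T` strictly above it in its column. -/
def IsUpArrow (T : FB n) (c : Cell) : Prop :=
  c ∈ T.cells ∧ c ≠ root n ∧ ∀ i', i' < c.1 → ((i', c.2) : Cell) ∉ T.cells

/-- The row space of `T`: cells lying, in their row, weakly to the right of the
root or of a left-arrow of `T`. -/
def RowSp (T : FB n) : Set Cell :=
  {c | IsCell n c ∧ ∃ j', c.2 ≤ j' ∧
    (((c.1, j') : Cell) = root n ∨ IsLeftArrow T (c.1, j'))}

/-- The column space of `T`: cells lying, in their column, weakly below the root or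
an up-arrow of `T`. -/
def ColSp (T : FB n) : Set Cell :=
  {c | IsCell n c ∧ ∃ i', i' ≤ c.1 ∧
    (((i', c.2) : Cell) = root n ∨ IsUpArrow T (i', c.2))}

/-- `c` is a free cell of `T`: it lies strictly below the up-arrow of `T` in its
column and strictly to the right of the left-arrow of `T` in its row. -/
def IsFree (T : FB n) (c : Cell) : Prop :=
  IsCell n c ∧ (∃ i', i' < c.1 ∧ IsUpArrow T (i', c.2)) ∧
    (∃ j', c.2 < j' ∧ IsLeftArrow T (c.1, j'))

/-- The relation `S ⊲ T` on fb-tableaux of size `n`. -/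
def Lhd (S T : FB n) : Prop :=
  ColSp S ⊆ ColSp T ∧ RowSp T ⊆ RowSp S ∧
    ∀ c : Cell, IsFree S c → IsFree T c → c ∈ S.cells → c ∈ T.cells

/-- `T` covers `S` in `esTam n`. -/
def CovRel (S T : FB n) : Prop :=
  Lhd S T ∧ S ≠ T ∧ ∀ U : FB n, Lhd S U → Lhd U T → U = S ∨ U = T

/-- `m` is the greatest lower bound of `x` and `y` in `esTam n`. -/
def IsMeet (x y m : FB n) : Prop :=
  Lhd m x ∧ Lhd m y ∧ ∀ t : FB n, Lhd t x → Lhd t y → Lhd t m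

/-- `j` is the least upper bound of `x` and `y` in `esTam n`. -/
def IsJoin (x y j : FB n) : Prop :=
  Lhd x j ∧ Lhd y j ∧ ∀ t : FB n, Lhd x t → Lhd y t → Lhd j t

/-- `T` is join-irreducible: it covers exactly one element. -/
def JoinIrr (T : FB n) : Prop := ∃! S : FB n, CovRel S T

/-- `T` is meet-irreducible: it is covered by exactly one element. -/
def MeetIrr (T : FB n) : Prop := ∃! S : FB n, CovRel T S

/-- A strict chain `f 0 ⊲ f 1 ⊲ ⋯ ⊲ f m` of length `m`. -/
def IsStrictChain {m : ℕ} (f : Fin (m + 1) → FB n) : Prop :=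
  ∀ i j : Fin (m + 1), i < j → Lhd (f i) (f j) ∧ f i ≠ f j

/-- `T` is small: every cell of `T` other than the root is an arrow. -/
def IsSmall (T : FB n) : Prop :=
  ∀ c ∈ T.cells, c ≠ root n → IsLeftArrow T c ∨ IsUpArrow T c

/-- `T` is binary: `T` has no free cells. -/
def IsBinary (T : FB n) : Prop := ∀ c : Cell, ¬ IsFree T c

/-- `c` lies strictly above the up-arrow of `T` in its column. -/
def PointedUp (T : FB n) (c : Cell) : Prop :=
  ∃ i', c.1 < i' ∧ IsUpArrow T (i', c.2)

/-- `c` is pointed by a left-arrow of `T`: it lies strictly to the left of the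
left-arrow of `T` in its row. -/
def PointedLeft (T : FB n) (c : Cell) : Prop :=
  ∃ j', j' < c.2 ∧ IsLeftArrow T (c.1, j')

end EsTam

namespace EsTam

/-- The description of the meet `L` of `M` and `N`:
(a) the root belongs to `L`;
(b) in each column, the up-arrow of `L` is at the lower (larger row index) of the
positions of the up-arrows of `M` and `N`;
(c) in each row, letting `c` be the leftmost (larger column index) of the positions
of the left-arrows of `M` and `N`, the left-arrow of `L` is at `c` if `c` does not
lie strictly above the up-arrow of `L` in its column, and otherwise at the nearest
cell to the left of `c` not lying strictly above the up-arrow of `L` in its column;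
(d) a free cell `c` of `L` belongs to `L` iff (`c ∈ M` or `c` is not free in `M`)
and (`c ∈ N` or `c` is not free in `N`); and `L` contains no cells other than the
root, its arrows, and the free cells prescribed in (d). -/
def MeetSpec (n : ℕ) (M N L : FB n) : Prop :=
  root n ∈ L.cells ∧
  (∀ j a b : ℕ, IsUpArrow M (a, j) → IsUpArrow N (b, j) →
    IsUpArrow L (max a b, j)) ∧
  (∀ i jM jN : ℕ, IsLeftArrow M (i, jM) → IsLeftArrow N (i, jN) →
    ((¬ PointedUp L (i, max jM jN) → IsLeftArrow L (i, max jM jN)) ∧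
     (PointedUp L (i, max jM jN) →
        ∃ j', max jM jN < j' ∧ IsLeftArrow L (i, j') ∧ ¬ PointedUp L (i, j') ∧
          ∀ j'', max jM jN < j'' → j'' < j' → PointedUp L (i, j'')))) ∧
  (∀ c : Cell, IsFree L c → (c ∈ L.cells ↔
      ((c ∈ M.cells ∨ ¬ IsFree M c) ∧ (c ∈ N.cells ∨ ¬ IsFree N c)))) ∧
  (∀ c ∈ L.cells, c = root n ∨ IsLeftArrow L c ∨ IsUpArrow L c ∨ IsFree L c)

/-!
An fb-tableau is determined by the rows `u j` of its up-arrows, the columns `l i` of its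
left-arrows, and which of its free cells carry a dot. Conversely, such data give an
fb-tableau as soon as they respect the staircase and the two support conditions: the
left-arrow of a row lies strictly below the up-arrow of its column, and the up-arrow of a
column strictly right of the left-arrow of its row. In these coordinates `S ⊲ T` reads
`u_T ≤ u_S`, `l_T ≤ l_S`, and dots of `S` on cells free in both survive in `T`.

The meet takes `u = max (u_M, u_N)`, then `l = max (l_M, l_N)` pushed left until the
support condition holds, and keeps a dot on a free cell unless `M` or `N` has that cell
free and empty. The join dually takes `l = min (l_M, l_N)` and `u = min (u_M, u_N)` pushed
up, and keeps the dots on cells free and dotted in `M` or in `N`. Given the up-arrows,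
rule (c) singles out the left-arrows, so the description pins down the meet.
-/

variable {n : ℕ}

theorem FB.one_le (T : FB n) : 1 ≤ n := (T.isCell_of_mem _ T.root_mem).2.1

theorem FB.ext_cells {S T : FB n} (h : S.cells = T.cells) : S = T := by
  cases S; cases T; simp_all

section Arrows

variable {T : FB n} {i j a b : ℕ}

theorem IsUpArrow.unique (ha : IsUpArrow T (a, j)) (hb : IsUpArrow T (b, j)) : a = b := by
  by_contra hne
  rcases Nat.lt_or_gt_of_ne hne with h | h
  exacts [hb.2.2 a h ha.1, ha.2.2 b h hb.1]

theorem IsLeftArrow.unique (ha : IsLeftArrow T (i, a)) (hb : IsLeftArrow T (i, b)) :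
    a = b := by
  by_contra hne
  rcases Nat.lt_or_gt_of_ne hne with h | h
  exacts [ha.2.2 b h hb.1, hb.2.2 a h ha.1]

theorem IsUpArrow.le_row_of_mem (h : IsUpArrow T (a, j)) (hm : (i, j) ∈ T.cells) : a ≤ i :=
  not_lt.mp fun hi => h.2.2 i hi hm

theorem IsLeftArrow.col_le_of_mem (h : IsLeftArrow T (i, b)) (hm : (i, j) ∈ T.cells) :
    j ≤ b :=
  not_lt.mp fun hj => h.2.2 j hj hm

/-- The root lies above every cell of column `n`, so that column has no up-arrow. -/
theorem IsUpArrow.col_lt (h : IsUpArrow T (i, j)) : j < n := by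
  obtain ⟨hi, -, -, hjn, -⟩ := T.isCell_of_mem _ h.1
  simp only at hi hjn
  by_contra hj
  obtain rfl : j = n := by omega
  rcases Nat.lt_or_ge 1 i with hi1 | hi1
  · exact h.2.2 1 hi1 T.root_mem
  · exact h.2.1 (by simp only [root, Prod.mk.injEq, and_true]; omega)

/-- The root lies to the left of every cell of row `1`, so that row has no left-arrow. -/
theorem IsLeftArrow.two_le_row (h : IsLeftArrow T (i, j)) : 2 ≤ i := by
  obtain ⟨hi, -, -, hjn, -⟩ := T.isCell_of_mem _ h.1
  simp only at hi hjn
  by_contra hi2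
  obtain rfl : i = 1 := by omega
  rcases Nat.lt_or_ge j n with hj | hj
  · exact h.2.2 n hj T.root_mem
  · exact h.2.1 (by simp only [root, Prod.mk.injEq, true_and]; omega)

theorem exists_isUpArrow (T : FB n) (hj : 1 ≤ j) (hjn : j < n) : ∃ i, IsUpArrow T (i, j) := by
  have hex : ∃ i, (i, j) ∈ T.cells := ⟨j + 1, T.border_mem _ ⟨by omega, by omega, rfl⟩⟩
  refine ⟨Nat.find hex, Nat.find_spec hex, fun hr => ?_, fun i' hi' => Nat.find_min hex hi'⟩
  have : j = n := congrArg Prod.snd hr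
  omega

theorem exists_isLeftArrow (T : FB n) (hi : 2 ≤ i) (hin : i ≤ n) :
    ∃ j, IsLeftArrow T (i, j) := by
  let P : ℕ → Prop := fun j => (i, j) ∈ T.cells
  have hb : P (i - 1) := T.border_mem _ ⟨hi, hin, rfl⟩
  refine ⟨Nat.findGreatest P n, Nat.findGreatest_spec (by omega) hb, fun hr => ?_,
    fun j' hj' hm => Nat.findGreatest_is_greatest hj' (T.isCell_of_mem _ hm).2.2.2.1 hm⟩
  have : i = 1 := congrArg Prod.fst hr
  omega

/-- Junk value `0` outside `1 ≤ j < n`. -/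
noncomputable def upArrowRow (T : FB n) (j : ℕ) : ℕ :=
  if h : ∃ i, IsUpArrow T (i, j) then h.choose else 0

/-- Junk value `0` outside `2 ≤ i ≤ n`. -/
noncomputable def leftArrowCol (T : FB n) (i : ℕ) : ℕ :=
  if h : ∃ j, IsLeftArrow T (i, j) then h.choose else 0

theorem IsUpArrow.upArrowRow_eq (h : IsUpArrow T (i, j)) : upArrowRow T j = i := by
  have hex : ∃ i, IsUpArrow T (i, j) := ⟨i, h⟩
  rw [upArrowRow, dif_pos hex]
  exact hex.choose_spec.unique h

theorem IsLeftArrow.leftArrowCol_eq (h : IsLeftArrow T (i, j)) : leftArrowCol T i = j := by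
  have hex : ∃ j, IsLeftArrow T (i, j) := ⟨j, h⟩
  rw [leftArrowCol, dif_pos hex]
  exact hex.choose_spec.unique h

theorem isUpArrow_upArrowRow (T : FB n) (hj : 1 ≤ j) (hjn : j < n) :
    IsUpArrow T (upArrowRow T j, j) := by
  obtain ⟨i, hi⟩ := exists_isUpArrow T hj hjn
  rwa [hi.upArrowRow_eq]

theorem isLeftArrow_leftArrowCol (T : FB n) (hi : 2 ≤ i) (hin : i ≤ n) :
    IsLeftArrow T (i, leftArrowCol T i) := by
  obtain ⟨j, hj⟩ := exists_isLeftArrow T hi hin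
  rwa [hj.leftArrowCol_eq]

theorem isUpArrow_iff : IsUpArrow T (i, j) ↔ 1 ≤ j ∧ j < n ∧ i = upArrowRow T j :=
  ⟨fun h => ⟨(T.isCell_of_mem _ h.1).2.2.1, h.col_lt, h.upArrowRow_eq.symm⟩,
    fun ⟨hj, hjn, hi⟩ => hi ▸ isUpArrow_upArrowRow T hj hjn⟩

theorem isLeftArrow_iff : IsLeftArrow T (i, j) ↔ 2 ≤ i ∧ i ≤ n ∧ j = leftArrowCol T i :=
  ⟨fun h => ⟨h.two_le_row, (T.isCell_of_mem _ h.1).2.1, h.leftArrowCol_eq.symm⟩,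
    fun ⟨hi, hin, hj⟩ => hj ▸ isLeftArrow_leftArrowCol T hi hin⟩

theorem upArrowRow_bounds (T : FB n) (hj : 1 ≤ j) (hjn : j < n) :
    1 ≤ upArrowRow T j ∧ upArrowRow T j ≤ j + 1 := by
  obtain ⟨h1, -, -, -, h5⟩ := T.isCell_of_mem _ (isUpArrow_upArrowRow T hj hjn).1
  simp only at h1 h5
  omega

theorem leftArrowCol_bounds (T : FB n) (hi : 2 ≤ i) (hin : i ≤ n) :
    i - 1 ≤ leftArrowCol T i ∧ leftArrowCol T i ≤ n := by
  obtain ⟨-, -, h3, h4, h5⟩ := T.isCell_of_mem _ (isLeftArrow_leftArrowCol T hi hin).1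
  simp only at h3 h4 h5
  omega

/-- A left-arrow has nothing to its left, so it is supported from above. -/
theorem upArrowRow_leftArrowCol_lt (T : FB n) (hi : 2 ≤ i) (hin : i ≤ n)
    (hl : leftArrowCol T i < n) : upArrowRow T (leftArrowCol T i) < i := by
  have hla := isLeftArrow_leftArrowCol T hi hin
  rcases T.supported _ hla.1 hla.2.1 with ⟨j', hj', hm⟩ | ⟨i', hi', hm⟩
  · exact absurd hm (hla.2.2 j' hj')
  · have h1 := (leftArrowCol_bounds T hi hin).1
    exact ((isUpArrow_upArrowRow T (by omega) hl).le_row_of_mem hm).trans_lt hi'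

/-- An up-arrow has nothing above it, so it is supported from the left. -/
theorem lt_leftArrowCol_upArrowRow (T : FB n) (hj : 1 ≤ j) (hjn : j < n)
    (hu : 2 ≤ upArrowRow T j) : j < leftArrowCol T (upArrowRow T j) := by
  have hua := isUpArrow_upArrowRow T hj hjn
  rcases T.supported _ hua.1 hua.2.1 with ⟨j', hj', hm⟩ | ⟨i', hi', hm⟩
  · have hun := (T.isCell_of_mem _ hua.1).2.1
    exact hj'.trans_le ((isLeftArrow_leftArrowCol T hu hun).col_le_of_mem hm)
  · exact absurd hm (hua.2.2 i' hi')

theorem pointedUp_iff : PointedUp T (i, j) ↔ 1 ≤ j ∧ j < n ∧ i < upArrowRow T j := by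
  simp only [PointedUp, isUpArrow_iff]
  constructor
  · rintro ⟨i', hi', hj, hjn, rfl⟩
    exact ⟨hj, hjn, hi'⟩
  · rintro ⟨hj, hjn, hi⟩
    exact ⟨_, hi, hj, hjn, rfl⟩

end Arrows

/-- Freeness of `c` with respect to arrow data: `u j` is the row of the up-arrow of
column `j` and `l i` the column of the left-arrow of row `i`. -/
def FreeFor (n : ℕ) (u l : ℕ → ℕ) (c : Cell) : Prop :=
  IsCell n c ∧ 2 ≤ c.1 ∧ c.2 < n ∧ u c.2 < c.1 ∧ c.2 < l c.1

theorem freeFor_congr {u u' l l' : ℕ → ℕ} (hu : ∀ j, 1 ≤ j → j < n → u j = u' j)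
    (hl : ∀ i, 2 ≤ i → i ≤ n → l i = l' i) {c : Cell} :
    FreeFor n u l c ↔ FreeFor n u' l' c := by
  refine and_congr_right fun hc => and_congr_right fun hi => and_congr_right fun hj => ?_
  rw [hu _ hc.2.2.1 hj, hl _ hi hc.2.1]

theorem isFree_iff {T : FB n} {c : Cell} :
    IsFree T c ↔ FreeFor n (upArrowRow T) (leftArrowCol T) c := by
  simp only [IsFree, FreeFor, isUpArrow_iff, isLeftArrow_iff]
  constructor
  · rintro ⟨hc, ⟨i', hi', -, hj, rfl⟩, ⟨j', hj', hi, -, rfl⟩⟩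
    exact ⟨hc, hi, hj, hi', hj'⟩
  · rintro ⟨hc, hi, hj, hu, hl⟩
    exact ⟨hc, ⟨_, hu, hc.2.2.1, hj, rfl⟩, ⟨_, hl, hi, hc.2.1, rfl⟩⟩

theorem isFree_congr {S T : FB n}
    (hu : ∀ j, 1 ≤ j → j < n → upArrowRow S j = upArrowRow T j)
    (hl : ∀ i, 2 ≤ i → i ≤ n → leftArrowCol S i = leftArrowCol T i) {c : Cell} :
    IsFree S c ↔ IsFree T c := by
  rw [isFree_iff, isFree_iff, freeFor_congr hu hl]

/-- A cell that is neither the root nor an arrow is supported both from the left and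
from above, hence free. -/
theorem FB.mem_cases (T : FB n) {c : Cell} (hc : c ∈ T.cells) :
    c = root n ∨ IsLeftArrow T c ∨ IsUpArrow T c ∨ IsFree T c := by
  by_cases hr : c = root n
  · exact Or.inl hr
  by_cases hla : IsLeftArrow T c
  · exact Or.inr (Or.inl hla)
  by_cases hua : IsUpArrow T c
  · exact Or.inr (Or.inr (Or.inl hua))
  refine Or.inr (Or.inr (Or.inr ?_))
  obtain ⟨i, j⟩ := c
  simp only [IsLeftArrow, IsUpArrow, not_and, not_forall, not_not] at hla hua
  obtain ⟨j', hj', hmj⟩ := hla hc hr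
  obtain ⟨i', hi', hmi⟩ := hua hc hr
  have hcell := T.isCell_of_mem _ hc
  obtain ⟨-, -, -, hj'n, -⟩ := T.isCell_of_mem _ hmj
  obtain ⟨hi'1, -, -, -, -⟩ := T.isCell_of_mem _ hmi
  simp only at hj' hi' hj'n hi'1
  have hi : 2 ≤ i := by omega
  have hj : j < n := by omega
  refine isFree_iff.mpr ⟨hcell, hi, hj, ?_, ?_⟩
  · exact ((isUpArrow_upArrowRow T hcell.2.2.1 hj).le_row_of_mem hmi).trans_lt hi'
  · exact hj'.trans_le ((isLeftArrow_leftArrowCol T hi hcell.2.1).col_le_of_mem hmj)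

theorem FB.cells_subset_of_arrows {S T : FB n}
    (hu : ∀ j, 1 ≤ j → j < n → upArrowRow S j = upArrowRow T j)
    (hl : ∀ i, 2 ≤ i → i ≤ n → leftArrowCol S i = leftArrowCol T i)
    (hF : ∀ c, IsFree S c → c ∈ S.cells → c ∈ T.cells) : S.cells ⊆ T.cells := by
  rintro ⟨i, j⟩ hc
  rcases S.mem_cases hc with hr | hla | hua | hfr
  · exact hr ▸ T.root_mem
  · obtain ⟨hi, hin, rfl⟩ := isLeftArrow_iff.mp hla
    exact hl i hi hin ▸ (isLeftArrow_leftArrowCol T hi hin).1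
  · obtain ⟨hj, hjn, rfl⟩ := isUpArrow_iff.mp hua
    exact hu j hj hjn ▸ (isUpArrow_upArrowRow T hj hjn).1
  · exact hF _ hfr hc

theorem FB.ext_of_arrows {S T : FB n}
    (hu : ∀ j, 1 ≤ j → j < n → upArrowRow S j = upArrowRow T j)
    (hl : ∀ i, 2 ≤ i → i ≤ n → leftArrowCol S i = leftArrowCol T i)
    (hF : ∀ c, IsFree S c → (c ∈ S.cells ↔ c ∈ T.cells)) : S = T := by
  have hu' j hj hjn := (hu j hj hjn).symm
  have hl' i hi hin := (hl i hi hin).symm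
  refine FB.ext_cells (subset_antisymm (cells_subset_of_arrows hu hl fun c h => (hF c h).mp)
    (cells_subset_of_arrows hu' hl' fun c h => (hF c ((isFree_congr hu hl).mpr h)).mpr))

theorem mem_colSp {T : FB n} {c : Cell} :
    c ∈ ColSp T ↔ IsCell n c ∧ (c.2 = n ∨ upArrowRow T c.2 ≤ c.1) := by
  refine and_congr_right fun hc => ?_
  simp only [root, Prod.mk.injEq, isUpArrow_iff]
  constructor
  · rintro ⟨i', hi', ⟨-, hj⟩ | ⟨-, -, rfl⟩⟩
    exacts [Or.inl hj, Or.inr hi']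
  · rintro (hj | hu)
    · exact ⟨1, hc.1, Or.inl ⟨rfl, hj⟩⟩
    · rcases Nat.lt_or_ge c.2 n with hjn | hjn
      · exact ⟨_, hu, Or.inr ⟨hc.2.2.1, hjn, rfl⟩⟩
      · exact ⟨1, hc.1, Or.inl ⟨rfl, le_antisymm hc.2.2.2.1 hjn⟩⟩

theorem mem_rowSp {T : FB n} {c : Cell} :
    c ∈ RowSp T ↔ IsCell n c ∧ (c.1 = 1 ∨ c.2 ≤ leftArrowCol T c.1) := by
  refine and_congr_right fun hc => ?_
  simp only [root, Prod.mk.injEq, isLeftArrow_iff]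
  constructor
  · rintro ⟨j', hj', ⟨hi, -⟩ | ⟨-, -, rfl⟩⟩
    exacts [Or.inl hi, Or.inr hj']
  · rintro (hi | hl)
    · exact ⟨n, hc.2.2.2.1, Or.inl ⟨hi, rfl⟩⟩
    · rcases Nat.lt_or_ge c.1 2 with hi | hi
      · exact ⟨n, hc.2.2.2.1, Or.inl ⟨by have := hc.1; omega, rfl⟩⟩
      · exact ⟨_, hl, Or.inr ⟨hi, hc.2.1, rfl⟩⟩

theorem colSp_subset_iff {S T : FB n} :
    ColSp S ⊆ ColSp T ↔ ∀ j, 1 ≤ j → j < n → upArrowRow T j ≤ upArrowRow S j := by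
  constructor
  · intro h j hj hjn
    have hS : (upArrowRow S j, j) ∈ ColSp S :=
      mem_colSp.mpr ⟨S.isCell_of_mem _ (isUpArrow_upArrowRow S hj hjn).1, Or.inr le_rfl⟩
    exact (mem_colSp.mp (h hS)).2.resolve_left hjn.ne
  · intro h c hc
    obtain ⟨hcell, hj | hu⟩ := mem_colSp.mp hc
    · exact mem_colSp.mpr ⟨hcell, Or.inl hj⟩
    · refine mem_colSp.mpr ⟨hcell, (eq_or_lt_of_le hcell.2.2.2.1).imp id fun hjn => ?_⟩
      exact (h _ hcell.2.2.1 hjn).trans hu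

theorem rowSp_subset_iff {S T : FB n} :
    RowSp T ⊆ RowSp S ↔ ∀ i, 2 ≤ i → i ≤ n → leftArrowCol T i ≤ leftArrowCol S i := by
  constructor
  · intro h i hi hin
    have hT : (i, leftArrowCol T i) ∈ RowSp T :=
      mem_rowSp.mpr ⟨T.isCell_of_mem _ (isLeftArrow_leftArrowCol T hi hin).1, Or.inr le_rfl⟩
    exact (mem_rowSp.mp (h hT)).2.resolve_left (by simp only; omega)
  · intro h c hc
    obtain ⟨hcell, hi | hl⟩ := mem_rowSp.mp hc
    · exact mem_rowSp.mpr ⟨hcell, Or.inl hi⟩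
    · rcases Nat.lt_or_ge c.1 2 with hi | hi
      · exact mem_rowSp.mpr ⟨hcell, Or.inl (by have := hcell.1; omega)⟩
      · exact mem_rowSp.mpr ⟨hcell, Or.inr (hl.trans (h _ hi hcell.2.1))⟩

theorem lhd_iff {S T : FB n} : Lhd S T ↔
    (∀ j, 1 ≤ j → j < n → upArrowRow T j ≤ upArrowRow S j) ∧
    (∀ i, 2 ≤ i → i ≤ n → leftArrowCol T i ≤ leftArrowCol S i) ∧
    (∀ c, IsFree S c → IsFree T c → c ∈ S.cells → c ∈ T.cells) := by
  rw [Lhd, colSp_subset_iff, rowSp_subset_iff]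

/-- Data from which an fb-tableau is built: `u j` is the row of the up-arrow of column
`j < n`, `l i` the column of the left-arrow of row `i ≥ 2`, and `F` the set of free
cells carrying a dot. The last field puts every border cell into the tableau. -/
structure IsArrowData (n : ℕ) (u l : ℕ → ℕ) (F : Set Cell) : Prop where
  one_le : 1 ≤ n
  one_le_u : ∀ j, 1 ≤ j → j < n → 1 ≤ u j
  u_le : ∀ j, 1 ≤ j → j < n → u j ≤ j + 1
  le_l : ∀ i, 2 ≤ i → i ≤ n → i - 1 ≤ l i
  l_le : ∀ i, 2 ≤ i → i ≤ n → l i ≤ n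
  u_l_lt : ∀ i, 2 ≤ i → i ≤ n → l i < n → u (l i) < i
  lt_l_u : ∀ j, 1 ≤ j → j < n → 2 ≤ u j → j < l (u j)
  freeFor_of_mem : ∀ c ∈ F, FreeFor n u l c
  border : ∀ i, 2 ≤ i → i ≤ n → u (i - 1) = i ∨ l i = i - 1 ∨ (i, i - 1) ∈ F

def arrowCells (n : ℕ) (u l : ℕ → ℕ) (F : Set Cell) : Set Cell :=
  {c | c = root n ∨ (1 ≤ c.2 ∧ c.2 < n ∧ c.1 = u c.2) ∨ (2 ≤ c.1 ∧ c.1 ≤ n ∧ c.2 = l c.1) ∨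
    c ∈ F}

namespace IsArrowData

variable {u l : ℕ → ℕ} {F : Set Cell} (hV : IsArrowData n u l F)
include hV

theorem u_le_of_mem {c : Cell} (hc : c ∈ arrowCells n u l F) (hj : c.2 < n) :
    u c.2 ≤ c.1 := by
  rcases hc with rfl | ⟨-, -, h⟩ | ⟨hi, hin, h⟩ | hF
  · exact absurd hj (lt_irrefl n)
  · exact h.ge
  · exact (h ▸ hV.u_l_lt _ hi hin (h ▸ hj)).le
  · exact (hV.freeFor_of_mem _ hF).2.2.2.1.le

theorem le_l_of_mem {c : Cell} (hc : c ∈ arrowCells n u l F) (hi : 2 ≤ c.1) :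
    c.2 ≤ l c.1 := by
  rcases hc with rfl | ⟨hj, hjn, h⟩ | ⟨-, -, h⟩ | hF
  · exact absurd hi (by simp [root])
  · exact (h ▸ hV.lt_l_u _ hj hjn (h ▸ hi)).le
  · exact h.le
  · exact (hV.freeFor_of_mem _ hF).2.2.2.2.le

theorem isCell_of_mem {c : Cell} (hc : c ∈ arrowCells n u l F) : IsCell n c := by
  have := hV.one_le
  rcases hc with rfl | ⟨hj, hjn, h⟩ | ⟨hi, hin, h⟩ | hF
  · exact ⟨le_rfl, this, this, le_rfl, Or.inl (by simp [root])⟩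
  · have := hV.one_le_u _ hj hjn
    have := hV.u_le _ hj hjn
    exact ⟨by omega, by omega, hj, hjn.le, by omega⟩
  · have := hV.le_l _ hi hin
    have := hV.l_le _ hi hin
    exact ⟨by omega, hin, by omega, by omega, by omega⟩
  · exact (hV.freeFor_of_mem _ hF).1

/-- An up-arrow in row `1` and a left-arrow in column `n` are supported by the root; the
other arrows support each other. -/
def toFB : FB n where
  cells := arrowCells n u l F
  isCell_of_mem _ := hV.isCell_of_mem
  root_mem := Or.inl rfl
  border_mem := by
    rintro ⟨i, j⟩ ⟨hi, hin, hj⟩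
    simp only at hi hin hj
    subst hj
    rcases hV.border i hi hin with h | h | h
    · exact Or.inr (Or.inl ⟨by omega, by omega, h.symm⟩)
    · exact Or.inr (Or.inr (Or.inl ⟨hi, hin, h.symm⟩))
    · exact Or.inr (Or.inr (Or.inr h))
  supported := by
    rintro ⟨i, j⟩ (hr | ⟨hj, hjn, hu⟩ | ⟨hi, hin, hl⟩ | hF) hne <;> simp only at *
    · exact absurd hr hne
    · subst hu
      rcases Nat.lt_or_ge (u j) 2 with hu | hu
      · have : u j = 1 := by have := hV.one_le_u j hj hjn; omega
        exact Or.inl ⟨n, hjn, Or.inl (by simp [root, this])⟩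
      · have := hV.u_le j hj hjn
        exact Or.inl ⟨_, hV.lt_l_u j hj hjn hu, Or.inr (Or.inr (Or.inl ⟨hu, by omega, rfl⟩))⟩
    · subst hl
      rcases Nat.lt_or_ge (l i) n with hl | hl
      · have := hV.le_l i hi hin
        exact Or.inr ⟨_, hV.u_l_lt i hi hin hl, Or.inr (Or.inl ⟨by omega, hl, rfl⟩)⟩
      · have : l i = n := le_antisymm (hV.l_le i hi hin) hl
        exact Or.inr ⟨1, by omega, Or.inl (by simp [root, this])⟩
    · obtain ⟨hc, -, hjn, hu, -⟩ := hV.freeFor_of_mem _ hF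
      exact Or.inr ⟨u j, hu, Or.inr (Or.inl ⟨hc.2.2.1, hjn, rfl⟩)⟩

theorem upArrowRow_toFB {j : ℕ} (hj : 1 ≤ j) (hjn : j < n) : upArrowRow hV.toFB j = u j := by
  refine IsUpArrow.upArrowRow_eq ⟨Or.inr (Or.inl ⟨hj, hjn, rfl⟩), fun h => ?_,
    fun i' hi' hm => (hV.u_le_of_mem hm hjn).not_gt hi'⟩
  have : j = n := congrArg Prod.snd h
  omega

theorem leftArrowCol_toFB {i : ℕ} (hi : 2 ≤ i) (hin : i ≤ n) :
    leftArrowCol hV.toFB i = l i := by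
  refine IsLeftArrow.leftArrowCol_eq ⟨Or.inr (Or.inr (Or.inl ⟨hi, hin, rfl⟩)), fun h => ?_,
    fun j' hj' hm => (hV.le_l_of_mem hm hi).not_gt hj'⟩
  have : i = 1 := congrArg Prod.fst h
  omega

theorem isFree_toFB_iff {c : Cell} : IsFree hV.toFB c ↔ FreeFor n u l c := by
  rw [isFree_iff]
  exact freeFor_congr (fun _ => hV.upArrowRow_toFB) (fun _ => hV.leftArrowCol_toFB)

theorem mem_toFB_iff_of_isFree {c : Cell} (hc : IsFree hV.toFB c) :
    c ∈ hV.toFB.cells ↔ c ∈ F := by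
  obtain ⟨-, hi, -, hu, hl⟩ := hV.isFree_toFB_iff.mp hc
  refine ⟨fun hm => ?_, fun hF => Or.inr (Or.inr (Or.inr hF))⟩
  rcases hm with rfl | ⟨-, -, h⟩ | ⟨-, -, h⟩ | hF
  · exact absurd hi (by simp [root])
  · omega
  · omega
  · exact hF

end IsArrowData

section Meet

variable (M N : FB n)

noncomputable def meetU (j : ℕ) : ℕ := max (upArrowRow M j) (upArrowRow N j)

theorem exists_meetL (i : ℕ) :
    ∃ j, max (leftArrowCol M i) (leftArrowCol N i) ≤ j ∧ (n ≤ j ∨ meetU M N j ≤ i) :=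
  ⟨max n _, le_max_right _ _, Or.inl (le_max_left _ _)⟩

/-- Rule (c): the first column, going left from the left-arrows of `M` and `N` in row
`i`, that does not lie strictly above the up-arrow prescribed by rule (b). -/
noncomputable def meetL (i : ℕ) : ℕ := Nat.find (exists_meetL M N i)

def meetF : Set Cell :=
  {c | FreeFor n (meetU M N) (meetL M N) c ∧
    (c ∈ M.cells ∨ ¬ IsFree M c) ∧ (c ∈ N.cells ∨ ¬ IsFree N c)}

theorem le_meetL (i : ℕ) : max (leftArrowCol M i) (leftArrowCol N i) ≤ meetL M N i :=
  (Nat.find_spec (exists_meetL M N i)).1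

theorem meetL_spec (i : ℕ) : n ≤ meetL M N i ∨ meetU M N (meetL M N i) ≤ i :=
  (Nat.find_spec (exists_meetL M N i)).2

theorem meetL_le {i j : ℕ} (h : max (leftArrowCol M i) (leftArrowCol N i) ≤ j)
    (hj : n ≤ j ∨ meetU M N j ≤ i) : meetL M N i ≤ j :=
  Nat.find_le ⟨h, hj⟩

theorem isArrowData_meet : IsArrowData n (meetU M N) (meetL M N) (meetF M N) where
  one_le := M.one_le
  one_le_u _ hj hjn := (upArrowRow_bounds M hj hjn).1.trans (le_max_left _ _)
  u_le _ hj hjn := max_le (upArrowRow_bounds M hj hjn).2 (upArrowRow_bounds N hj hjn).2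
  le_l i hi hin :=
    (leftArrowCol_bounds M hi hin).1.trans ((le_max_left _ _).trans (le_meetL M N i))
  l_le _ hi hin :=
    meetL_le M N (max_le (leftArrowCol_bounds M hi hin).2 (leftArrowCol_bounds N hi hin).2)
      (Or.inl le_rfl)
  u_l_lt i hi hin hl := by
    have hle := (meetL_spec M N i).resolve_left hl.not_ge
    -- Equality is impossible: an up-arrow of `M` or `N` in row `i` lies strictly right of
    -- the left-arrow of that row.
    have hne (T : FB n) (hT : leftArrowCol T i ≤ meetL M N i) :
        upArrowRow T (meetL M N i) ≠ i := by
      intro hTi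
      have := (leftArrowCol_bounds M hi hin).1.trans ((le_max_left _ _).trans (le_meetL M N i))
      have := lt_leftArrowCol_upArrowRow T (by omega) hl (by omega)
      rw [hTi] at this
      omega
    have := hne M ((le_max_left _ _).trans (le_meetL M N i))
    have := hne N ((le_max_right _ _).trans (le_meetL M N i))
    simp only [meetU] at hle ⊢
    omega
  lt_l_u j hj hjn hu := by
    rcases max_choice (upArrowRow M j) (upArrowRow N j) with h | h <;> rw [meetU, h] at hu ⊢
    · exact (lt_leftArrowCol_upArrowRow M hj hjn hu).trans_le
        ((le_max_left _ _).trans (le_meetL M N _))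
    · exact (lt_leftArrowCol_upArrowRow N hj hjn hu).trans_le
        ((le_max_right _ _).trans (le_meetL M N _))
  freeFor_of_mem _ hc := hc.1
  border i hi hin := by
    by_cases hu : meetU M N (i - 1) = i
    · exact Or.inl hu
    by_cases hl : meetL M N i = i - 1
    · exact Or.inr (Or.inl hl)
    have := upArrowRow_bounds M (j := i - 1) (by omega) (by omega)
    have := upArrowRow_bounds N (j := i - 1) (by omega) (by omega)
    have := (leftArrowCol_bounds M hi hin).1.trans ((le_max_left _ _).trans (le_meetL M N i))
    refine Or.inr (Or.inr ⟨?_, Or.inl (M.border_mem _ ⟨hi, hin, rfl⟩),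
      Or.inl (N.border_mem _ ⟨hi, hin, rfl⟩)⟩)
    simp only [FreeFor, IsCell, meetU] at hu ⊢
    omega

noncomputable def meetFB : FB n := (isArrowData_meet M N).toFB

theorem upArrowRow_meetFB {j : ℕ} (hj : 1 ≤ j) (hjn : j < n) :
    upArrowRow (meetFB M N) j = meetU M N j :=
  (isArrowData_meet M N).upArrowRow_toFB hj hjn

theorem leftArrowCol_meetFB {i : ℕ} (hi : 2 ≤ i) (hin : i ≤ n) :
    leftArrowCol (meetFB M N) i = meetL M N i :=
  (isArrowData_meet M N).leftArrowCol_toFB hi hin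

theorem mem_meetFB_iff_of_isFree {c : Cell} (hc : IsFree (meetFB M N) c) :
    c ∈ (meetFB M N).cells ↔ (c ∈ M.cells ∨ ¬ IsFree M c) ∧ (c ∈ N.cells ∨ ¬ IsFree N c) := by
  rw [meetFB, (isArrowData_meet M N).mem_toFB_iff_of_isFree hc]
  exact and_iff_right ((isArrowData_meet M N).isFree_toFB_iff.mp hc)

theorem meetFB_lhd_left : Lhd (meetFB M N) M := by
  refine lhd_iff.mpr ⟨fun j hj hjn => ?_, fun i hi hin => ?_, fun c hc hcM hm => ?_⟩
  · rw [upArrowRow_meetFB M N hj hjn]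
    exact le_max_left _ _
  · rw [leftArrowCol_meetFB M N hi hin]
    exact (le_max_left _ _).trans (le_meetL M N i)
  · exact ((mem_meetFB_iff_of_isFree M N hc).mp hm).1.resolve_right (not_not.mpr hcM)

theorem meetFB_lhd_right : Lhd (meetFB M N) N := by
  refine lhd_iff.mpr ⟨fun j hj hjn => ?_, fun i hi hin => ?_, fun c hc hcN hm => ?_⟩
  · rw [upArrowRow_meetFB M N hj hjn]
    exact le_max_right _ _
  · rw [leftArrowCol_meetFB M N hi hin]
    exact (le_max_right _ _).trans (le_meetL M N i)
  · exact ((mem_meetFB_iff_of_isFree M N hc).mp hm).2.resolve_right (not_not.mpr hcN)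

variable {M N} in
theorem lhd_meetFB {T : FB n} (hM : Lhd T M) (hN : Lhd T N) : Lhd T (meetFB M N) := by
  rw [lhd_iff] at hM hN ⊢
  refine ⟨fun j hj hjn => ?_, fun i hi hin => ?_, fun c hcT hc hm => ?_⟩
  · rw [upArrowRow_meetFB M N hj hjn]
    exact max_le (hM.1 j hj hjn) (hN.1 j hj hjn)
  · rw [leftArrowCol_meetFB M N hi hin]
    refine meetL_le M N (max_le (hM.2.1 i hi hin) (hN.2.1 i hi hin)) ?_
    rcases Nat.lt_or_ge (leftArrowCol T i) n with hl | hl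
    · have := (leftArrowCol_bounds T hi hin).1
      have hj : 1 ≤ leftArrowCol T i := by omega
      exact Or.inr ((max_le (hM.1 _ hj hl) (hN.1 _ hj hl)).trans
        (upArrowRow_leftArrowCol_lt T hi hin hl).le)
    · exact Or.inl hl
  · refine (mem_meetFB_iff_of_isFree M N hc).mpr ⟨?_, ?_⟩
    · exact or_iff_not_imp_right.mpr fun h => hM.2.2 c hcT (not_not.mp h) hm
    · exact or_iff_not_imp_right.mpr fun h => hN.2.2 c hcT (not_not.mp h) hm

theorem isMeet_meetFB : IsMeet M N (meetFB M N) :=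
  ⟨meetFB_lhd_left M N, meetFB_lhd_right M N, fun _ => lhd_meetFB⟩

end Meet

section Join

variable (M N : FB n)

noncomputable def joinL (i : ℕ) : ℕ := min (leftArrowCol M i) (leftArrowCol N i)

/-- The lowest row, weakly above the up-arrows of `M` and `N` in column `j`, that is
row `1` or has its join left-arrow strictly left of column `j`. -/
noncomputable def joinU (j : ℕ) : ℕ :=
  Nat.findGreatest (fun i => i = 1 ∨ j < joinL M N i) (min (upArrowRow M j) (upArrowRow N j))

def joinF : Set Cell :=
  {c | FreeFor n (joinU M N) (joinL M N) c ∧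
    ((c ∈ M.cells ∧ IsFree M c) ∨ (c ∈ N.cells ∧ IsFree N c))}

theorem joinU_le (j : ℕ) : joinU M N j ≤ min (upArrowRow M j) (upArrowRow N j) :=
  Nat.findGreatest_le _

theorem one_le_min_upArrowRow {j : ℕ} (hj : 1 ≤ j) (hjn : j < n) :
    1 ≤ min (upArrowRow M j) (upArrowRow N j) :=
  le_min (upArrowRow_bounds M hj hjn).1 (upArrowRow_bounds N hj hjn).1

theorem one_le_joinU {j : ℕ} (hj : 1 ≤ j) (hjn : j < n) : 1 ≤ joinU M N j :=
  Nat.le_findGreatest (one_le_min_upArrowRow M N hj hjn) (Or.inl rfl)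

theorem joinU_spec {j : ℕ} (hj : 1 ≤ j) (hjn : j < n) :
    joinU M N j = 1 ∨ j < joinL M N (joinU M N j) :=
  Nat.findGreatest_spec (P := fun i => i = 1 ∨ j < joinL M N i)
    (one_le_min_upArrowRow M N hj hjn) (Or.inl rfl)

theorem le_joinU {i j : ℕ} (h : i ≤ min (upArrowRow M j) (upArrowRow N j))
    (hi : i = 1 ∨ j < joinL M N i) : i ≤ joinU M N j :=
  Nat.le_findGreatest h hi

theorem isArrowData_join : IsArrowData n (joinU M N) (joinL M N) (joinF M N) where
  one_le := M.one_le
  one_le_u _ hj hjn := one_le_joinU M N hj hjn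
  u_le j hj hjn := (joinU_le M N j).trans ((min_le_left _ _).trans (upArrowRow_bounds M hj hjn).2)
  le_l _ hi hin := le_min (leftArrowCol_bounds M hi hin).1 (leftArrowCol_bounds N hi hin).1
  l_le _ hi hin := (min_le_left _ _).trans (leftArrowCol_bounds M hi hin).2
  u_l_lt i hi hin hl := by
    rcases min_choice (leftArrowCol M i) (leftArrowCol N i) with h | h <;>
      rw [joinL, h] at hl ⊢
    · exact (joinU_le M N _).trans_lt
        ((min_le_left _ _).trans_lt (upArrowRow_leftArrowCol_lt M hi hin hl))
    · exact (joinU_le M N _).trans_lt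
        ((min_le_right _ _).trans_lt (upArrowRow_leftArrowCol_lt N hi hin hl))
  lt_l_u _ hj hjn hu := (joinU_spec M N hj hjn).resolve_left (by omega)
  freeFor_of_mem _ hc := hc.1
  border i hi hin := by
    by_cases hu : joinU M N (i - 1) = i
    · exact Or.inl hu
    by_cases hl : joinL M N i = i - 1
    · exact Or.inr (Or.inl hl)
    have hcell : IsCell n (i, i - 1) := ⟨by omega, hin, by omega, by omega, Or.inr le_rfl⟩
    have := leftArrowCol_bounds M hi hin
    have := leftArrowCol_bounds N hi hin
    have hl' : i - 1 < joinL M N i := by simp only [joinL] at hl ⊢; omega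
    have hfree (T : FB n) (hT : upArrowRow T (i - 1) < i) (hl : i - 1 < leftArrowCol T i) :
        (i, i - 1) ∈ T.cells ∧ IsFree T (i, i - 1) :=
      ⟨T.border_mem _ ⟨hi, hin, rfl⟩, isFree_iff.mpr ⟨hcell, hi, by omega, hT, hl⟩⟩
    -- If both up-arrows sat on the border cell, so would the up-arrow of the join.
    have hMN : upArrowRow M (i - 1) < i ∨ upArrowRow N (i - 1) < i := by
      have := upArrowRow_bounds M (j := i - 1) (by omega) (by omega)
      have := upArrowRow_bounds N (j := i - 1) (by omega) (by omega)
      by_contra! h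
      have hmin : min (upArrowRow M (i - 1)) (upArrowRow N (i - 1)) = i := by omega
      exact hu (le_antisymm ((joinU_le M N (i - 1)).trans hmin.le)
        (le_joinU M N hmin.ge (Or.inr (by omega))))
    refine Or.inr (Or.inr ⟨⟨hcell, hi, by omega, ?_, hl'⟩, ?_⟩)
    · show joinU M N (i - 1) < i
      have := joinU_le M N (i - 1)
      omega
    · exact hMN.imp (fun h => hfree M h (by simp only [joinL] at hl'; omega))
        (fun h => hfree N h (by simp only [joinL] at hl'; omega))

noncomputable def joinFB : FB n := (isArrowData_join M N).toFB

theorem upArrowRow_joinFB {j : ℕ} (hj : 1 ≤ j) (hjn : j < n) :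
    upArrowRow (joinFB M N) j = joinU M N j :=
  (isArrowData_join M N).upArrowRow_toFB hj hjn

theorem leftArrowCol_joinFB {i : ℕ} (hi : 2 ≤ i) (hin : i ≤ n) :
    leftArrowCol (joinFB M N) i = joinL M N i :=
  (isArrowData_join M N).leftArrowCol_toFB hi hin

theorem mem_joinFB_iff_of_isFree {c : Cell} (hc : IsFree (joinFB M N) c) :
    c ∈ (joinFB M N).cells ↔ (c ∈ M.cells ∧ IsFree M c) ∨ (c ∈ N.cells ∧ IsFree N c) := by
  rw [joinFB, (isArrowData_join M N).mem_toFB_iff_of_isFree hc]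
  exact and_iff_right ((isArrowData_join M N).isFree_toFB_iff.mp hc)

theorem lhd_joinFB_left : Lhd M (joinFB M N) := by
  refine lhd_iff.mpr ⟨fun j hj hjn => ?_, fun i hi hin => ?_, fun c hcM hc hm => ?_⟩
  · rw [upArrowRow_joinFB M N hj hjn]
    exact (joinU_le M N j).trans (min_le_left _ _)
  · rw [leftArrowCol_joinFB M N hi hin]
    exact min_le_left _ _
  · exact (mem_joinFB_iff_of_isFree M N hc).mpr (Or.inl ⟨hm, hcM⟩)

theorem lhd_joinFB_right : Lhd N (joinFB M N) := by
  refine lhd_iff.mpr ⟨fun j hj hjn => ?_, fun i hi hin => ?_, fun c hcN hc hm => ?_⟩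
  · rw [upArrowRow_joinFB M N hj hjn]
    exact (joinU_le M N j).trans (min_le_right _ _)
  · rw [leftArrowCol_joinFB M N hi hin]
    exact min_le_right _ _
  · exact (mem_joinFB_iff_of_isFree M N hc).mpr (Or.inr ⟨hm, hcN⟩)

variable {M N} in
theorem joinFB_lhd {T : FB n} (hM : Lhd M T) (hN : Lhd N T) : Lhd (joinFB M N) T := by
  rw [lhd_iff] at hM hN ⊢
  refine ⟨fun j hj hjn => ?_, fun i hi hin => ?_, fun c hc hcT hm => ?_⟩
  · rw [upArrowRow_joinFB M N hj hjn]
    refine le_joinU M N (le_min (hM.1 j hj hjn) (hN.1 j hj hjn)) ?_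
    have := upArrowRow_bounds T hj hjn
    rcases Nat.lt_or_ge (upArrowRow T j) 2 with hu | hu
    · exact Or.inl (by omega)
    · have hun := (T.isCell_of_mem _ (isUpArrow_upArrowRow T hj hjn).1).2.1
      exact Or.inr ((lt_leftArrowCol_upArrowRow T hj hjn hu).trans_le
        (le_min (hM.2.1 _ hu hun) (hN.2.1 _ hu hun)))
  · rw [leftArrowCol_joinFB M N hi hin]
    exact le_min (hM.2.1 i hi hin) (hN.2.1 i hi hin)
  · rcases (mem_joinFB_iff_of_isFree M N hc).mp hm with ⟨hmM, hcM⟩ | ⟨hmN, hcN⟩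
    exacts [hM.2.2 c hcM hcT hmM, hN.2.2 c hcN hcT hmN]

theorem isJoin_joinFB : IsJoin M N (joinFB M N) :=
  ⟨lhd_joinFB_left M N, lhd_joinFB_right M N, fun _ => joinFB_lhd⟩

end Join

section MeetSpec

variable {M N L : FB n}

/-- Given the up-arrows of rule (b), rule (c) in row `i` says exactly that the
left-arrow of `L` sits in the column `meetL M N i`. -/
theorem meetRule_iff (hu : ∀ j, 1 ≤ j → j < n → upArrowRow L j = meetU M N j) {i jM jN : ℕ}
    (hM : IsLeftArrow M (i, jM)) (hN : IsLeftArrow N (i, jN)) :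
    ((¬ PointedUp L (i, max jM jN) → IsLeftArrow L (i, max jM jN)) ∧
      (PointedUp L (i, max jM jN) →
        ∃ j', max jM jN < j' ∧ IsLeftArrow L (i, j') ∧ ¬ PointedUp L (i, j') ∧
          ∀ j'', max jM jN < j'' → j'' < j' → PointedUp L (i, j''))) ↔
      leftArrowCol L i = meetL M N i := by
  have hi := hM.two_le_row
  have hin := (M.isCell_of_mem _ hM.1).2.1
  obtain rfl := hM.leftArrowCol_eq
  obtain rfl := hN.leftArrowCol_eq
  rw [meetL, eq_comm, Nat.find_eq_iff]
  set m := max (leftArrowCol M i) (leftArrowCol N i)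
  have hm := (leftArrowCol_bounds M hi hin).1.trans (le_max_left _ (leftArrowCol N i))
  have hp (j : ℕ) (hj : m ≤ j) : PointedUp L (i, j) ↔ ¬ (n ≤ j ∨ meetU M N j ≤ i) := by
    rw [pointedUp_iff]
    constructor
    · rintro ⟨hj1, hjn, hlt⟩
      rw [hu j hj1 hjn] at hlt
      omega
    · intro h
      have hjn : j < n := by omega
      rw [hu j (by omega) hjn]
      omega
  have hl (j : ℕ) : IsLeftArrow L (i, j) ↔ j = leftArrowCol L i := by
    simp [isLeftArrow_iff, hi, hin]
  generalize leftArrowCol L i = D at hl ⊢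
  constructor
  · rintro ⟨hnp, hpt⟩
    by_cases hCm : n ≤ m ∨ meetU M N m ≤ i
    · obtain rfl := (hl m).mp (hnp fun h => (hp m le_rfl).mp h hCm)
      exact ⟨⟨le_rfl, hCm⟩, fun k hk ⟨hmk, _⟩ => (hk.trans_le hmk).false⟩
    · obtain ⟨j', hmj', hla, hnp', hbetween⟩ := hpt ((hp m le_rfl).mpr hCm)
      obtain rfl := (hl j').mp hla
      refine ⟨⟨hmj'.le, not_not.mp fun h => hnp' ((hp _ hmj'.le).mpr h)⟩,
        fun k hk ⟨hmk, hCk⟩ => ?_⟩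
      rcases hmk.eq_or_lt with rfl | hmk
      · exact hCm hCk
      · exact (hp k hmk.le).mp (hbetween k hmk hk) hCk
  · rintro ⟨⟨hmD, hCD⟩, hmin⟩
    refine ⟨fun hnp => (hl m).mpr ?_, fun hpm => ⟨_, ?_, (hl _).mpr rfl, ?_, ?_⟩⟩
    · have hCm := not_not.mp fun h => hnp ((hp m le_rfl).mpr h)
      exact hmD.eq_of_not_lt fun hlt => hmin m hlt ⟨le_rfl, hCm⟩
    · exact hmD.lt_of_ne fun h => (hp m le_rfl).mp hpm (h ▸ hCD)
    · exact fun h => (hp _ hmD).mp h hCD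
    · exact fun j hmj hjD => (hp j hmj.le).mpr fun hC => hmin j hjD ⟨hmj.le, hC⟩

variable (M N) in
theorem meetSpec_meetFB : MeetSpec n M N (meetFB M N) := by
  refine ⟨(meetFB M N).root_mem, fun j a b ha hb => ?_, fun i jM jN hM hN => ?_,
    fun c hc => mem_meetFB_iff_of_isFree M N hc, fun c hc => (meetFB M N).mem_cases hc⟩
  · obtain ⟨hj, hjn, -⟩ := isUpArrow_iff.mp ha
    rw [isUpArrow_iff, upArrowRow_meetFB M N hj hjn, meetU, ha.upArrowRow_eq,
      hb.upArrowRow_eq]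
    exact ⟨hj, hjn, rfl⟩
  · exact (meetRule_iff (fun _ => upArrowRow_meetFB M N) hM hN).mpr
      (leftArrowCol_meetFB M N hM.two_le_row (M.isCell_of_mem _ hM.1).2.1)

theorem MeetSpec.eq_meetFB (h : MeetSpec n M N L) : L = meetFB M N := by
  have hu (j : ℕ) (hj : 1 ≤ j) (hjn : j < n) : upArrowRow L j = meetU M N j :=
    (h.2.1 j _ _ (isUpArrow_upArrowRow M hj hjn) (isUpArrow_upArrowRow N hj hjn)).upArrowRow_eq
  have hu' (j : ℕ) (hj : 1 ≤ j) (hjn : j < n) :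
      upArrowRow L j = upArrowRow (meetFB M N) j := by
    rw [hu j hj hjn, upArrowRow_meetFB M N hj hjn]
  have hl (i : ℕ) (hi : 2 ≤ i) (hin : i ≤ n) :
      leftArrowCol L i = leftArrowCol (meetFB M N) i := by
    have hM := isLeftArrow_leftArrowCol M hi hin
    have hN := isLeftArrow_leftArrowCol N hi hin
    rw [leftArrowCol_meetFB M N hi hin]
    exact (meetRule_iff hu hM hN).mp (h.2.2.1 i _ _ hM hN)
  refine FB.ext_of_arrows hu' hl fun c hc => ?_
  rw [h.2.2.2.1 c hc, mem_meetFB_iff_of_isFree M N ((isFree_congr hu' hl).mp hc)]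

end MeetSpec

theorem esTam_lattice_and_meet_description_general (n : ℕ) :
    (∀ M N : FB n, ∃ L : FB n, IsMeet M N L) ∧
    (∀ M N : FB n, ∃ J : FB n, IsJoin M N J) ∧
    (∀ M N L : FB n, MeetSpec n M N L → IsMeet M N L) ∧
    (∀ M N : FB n, ∃! L : FB n, MeetSpec n M N L) :=
  ⟨fun M N => ⟨meetFB M N, isMeet_meetFB M N⟩,
    fun M N => ⟨joinFB M N, isJoin_joinFB M N⟩,
    fun M N _ h => h.eq_meetFB ▸ isMeet_meetFB M N,
    fun M N => ⟨meetFB M N, meetSpec_meetFB M N, fun _ h => h.eq_meetFB⟩⟩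

/-- `(esTam n, ⊲)` is a lattice, and the meet of `M` and `N` is the
fb-tableau determined by the conditions (a)–(d) of `MeetSpec`. -/
theorem esTam_lattice_and_meet_description (n : ℕ) (hn : 1 ≤ n) :
    (∀ M N : FB n, ∃ L : FB n, IsMeet M N L) ∧
    (∀ M N : FB n, ∃ J : FB n, IsJoin M N J) ∧
    (∀ M N L : FB n, MeetSpec n M N L → IsMeet M N L) ∧
    (∀ M N : FB n, ∃! L : FB n, MeetSpec n M N L) :=
  esTam_lattice_and_meet_description_general n

end EsTam
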